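/- For any formula F with no occurrence of ¬, either every unit-chain-expansion reduct of F evaluates to 1 under a given valuation frame M, or every such reduct evaluates to 0 under M. -/
import Mathlib


/-- Atomic symbols: literals from `A` together with ⊤ and ⊥. -/
inductive Atom (A : Type) : Type where
  | lit : A → Atom A
  | top : Atom A
  | bot : Atom A

/-- Complement on atoms, induced by a complement map `c` on literals. -/
def Atom.compl {A : Type} (c : A → A) : Atom A → Atom A
  | .lit a => .lit (c a)
  | .top => .bot
  | .bot => .top

/-- Formulas of gradual classical logic. `grad` is the connective ⋗. -/
inductive Fm (A : Type) : Type where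
  | atom : Atom A → Fm A
  | and : Fm A → Fm A → Fm A
  | or : Fm A → Fm A → Fm A
  | neg : Fm A → Fm A
  | grad : Fm A → Fm A → Fm A

/-- One-step rewriting using only the five ⋗-rules (with congruence closure). -/
inductive GStep {A : Type} : Fm A → Fm A → Prop where
  | gradAssoc (F G H) : GStep (.grad (.grad F G) H)
      (.and (.grad F H) (.or (.grad F G) (.grad F (.grad G H))))
  | gradAndL (F G H) : GStep (.grad (.and F G) H) (.and (.grad F H) (.grad G H))
  | gradOrL (F G H) : GStep (.grad (.or F G) H) (.or (.grad F H) (.grad G H))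
  | gradAndR (F G H) : GStep (.grad F (.and G H)) (.and (.grad F G) (.grad F H))
  | gradOrR (F G H) : GStep (.grad F (.or G H)) (.or (.grad F G) (.grad F H))
  | andL {F F'} (G) : GStep F F' → GStep (.and F G) (.and F' G)
  | andR (F) {G G'} : GStep G G' → GStep (.and F G) (.and F G')
  | orL {F F'} (G) : GStep F F' → GStep (.or F G) (.or F' G)
  | orR (F) {G G'} : GStep G G' → GStep (.or F G) (.or F G')
  | negC {F F'} : GStep F F' → GStep (.neg F) (.neg F')
  | gradL {F F'} (G) : GStep F F' → GStep (.grad F G) (.grad F' G)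
  | gradR (F) {G G'} : GStep G G' → GStep (.grad F G) (.grad F G')

/-- One-step rewriting with both the ¬-rules and the ⋗-rules (congruence closure). -/
inductive Step {A : Type} (c : A → A) : Fm A → Fm A → Prop where
  | negAtom (s) : Step c (.neg (.atom s)) (.atom (s.compl c))
  | negAnd (F G) : Step c (.neg (.and F G)) (.or (.neg F) (.neg G))
  | negOr (F G) : Step c (.neg (.or F G)) (.and (.neg F) (.neg G))
  | negGrad (s F) : Step c (.neg (.grad (.atom s) F))
      (.or (.atom (s.compl c)) (.grad (.atom s) (.neg F)))
  | gradAssoc (F G H) : Step c (.grad (.grad F G) H)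
      (.and (.grad F H) (.or (.grad F G) (.grad F (.grad G H))))
  | gradAndL (F G H) : Step c (.grad (.and F G) H) (.and (.grad F H) (.grad G H))
  | gradOrL (F G H) : Step c (.grad (.or F G) H) (.or (.grad F H) (.grad G H))
  | gradAndR (F G H) : Step c (.grad F (.and G H)) (.and (.grad F G) (.grad F H))
  | gradOrR (F G H) : Step c (.grad F (.or G H)) (.or (.grad F G) (.grad F H))
  | andL {F F'} (G) : Step c F F' → Step c (.and F G) (.and F' G)
  | andR (F) {G G'} : Step c G G' → Step c (.and F G) (.and F G')
  | orL {F F'} (G) : Step c F F' → Step c (.or F G) (.or F' G)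
  | orR (F) {G G'} : Step c G G' → Step c (.or F G) (.or F G')
  | negC {F F'} : Step c F F' → Step c (.neg F) (.neg F')
  | gradL {F F'} (G) : Step c F F' → Step c (.grad F G) (.grad F' G)
  | gradR (F) {G G'} : Step c G G' → Step c (.grad F G) (.grad F G')

/-- Reduction: reflexive-transitive closure of one-step rewriting (all rules). -/
def Red {A : Type} (c : A → A) : Fm A → Fm A → Prop :=
  Relation.ReflTransGen (Step c)

/-- Reduction using only the ⋗-rules. -/
def GRed {A : Type} : Fm A → Fm A → Prop :=
  Relation.ReflTransGen GStep

/-- Unit chains (possibly of length one, i.e. a single atom): s₀⋗s₁⋗⋯⋗s_k. -/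
inductive UnitTail {A : Type} : Fm A → Prop where
  | atom (s : Atom A) : UnitTail (.atom s)
  | grad (s : Atom A) {F : Fm A} : UnitTail F → UnitTail (.grad (.atom s) F)

/-- Formulas in unit chain expansion: built from atoms and unit chains via ∧ and ∨;
in particular no ¬ occurs and every ⋗ lies in a unit chain of atoms. -/
inductive UCE {A : Type} : Fm A → Prop where
  | atom (s : Atom A) : UCE (.atom s)
  | and {F G : Fm A} : UCE F → UCE G → UCE (.and F G)
  | or {F G : Fm A} : UCE F → UCE G → UCE (.or F G)
  | chain (s : Atom A) {F : Fm A} : UnitTail F → UCE (.grad (.atom s) F)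

/-- Negation-free formulas. -/
inductive NegFree {A : Type} : Fm A → Prop where
  | atom (s : Atom A) : NegFree (.atom s)
  | and {F G : Fm A} : NegFree F → NegFree G → NegFree (.and F G)
  | or {F G : Fm A} : NegFree F → NegFree G → NegFree (.or F G)
  | grad {F G : Fm A} : NegFree F → NegFree G → NegFree (.grad F G)

/-- A valuation frame: a local interpretation `I` on prefix-sequences and atoms,
subject to the conditions of gradual classical logic.  The global interpretation `J`
is determined by `I` (see `GFrame.valAux`). -/
structure GFrame (A : Type) (c : A → A) : Type where
  I : List (Atom A) → Atom A → Bool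
  I_top : ∀ ψ, I ψ .top = true
  I_bot : ∀ ψ, I ψ .bot = false
  I_compl : ∀ ψ (a : A), (I ψ (.lit a) = false ↔ I ψ (.lit (c a)) = true)
  I_sync : ∀ ψ ψ' s, ψ.length = ψ'.length → I ψ s = I ψ' s

/-- Valuation relative to a prefix ψ.  On a unit chain s₀⋗⋯⋗s_k (with prefix ε)
this computes the global interpretation J(s₀…s_k) = 1 iff every local step is 1;
∧ and ∨ are Boolean. -/
def GFrame.valAux {A : Type} {c : A → A} (M : GFrame A c) :
    List (Atom A) → Fm A → Bool
  | ψ, .atom s => M.I ψ s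
  | ψ, .and F G => M.valAux ψ F && M.valAux ψ G
  | ψ, .or F G => M.valAux ψ F || M.valAux ψ G
  | ψ, .neg F => !(M.valAux ψ F)
  | ψ, .grad (.atom s) G => M.I ψ s && M.valAux (ψ ++ [s]) G
  | _, .grad _ _ => false

/-- The valuation [M ⊨ F]. -/
def GFrame.val {A : Type} {c : A → A} (M : GFrame A c) (F : Fm A) : Bool :=
  M.valAux [] F

/-- Push `s ⋗ ·` through ∧ and ∨ (normalization step of `recursiveReduce`). -/
def gradDist {A : Type} (s : Atom A) : Fm A → Fm A
  | .and F G => .and (gradDist s F) (gradDist s G)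
  | .or F G => .or (gradDist s F) (gradDist s G)
  | F => .grad (.atom s) F

/-- `recursiveReduce`: swap ∧/∨, complement non-chain atoms, and replace a chain
with head s and tail T by s^c ∨ (s ⋗ recursiveReduce T), normalized into unit
chain expansion.  On a unit chain s₀⋗⋯⋗s_k it yields
s₀^c ∨ (s₀⋗s₁^c) ∨ ⋯ ∨ (s₀⋗⋯⋗s_{k−1}⋗s_k^c). -/
def recursiveReduce {A : Type} (c : A → A) : Fm A → Fm A
  | .atom s => .atom (s.compl c)
  | .and F G => .or (recursiveReduce c F) (recursiveReduce c G)
  | .or F G => .and (recursiveReduce c F) (recursiveReduce c G)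
  | .neg F => .neg (recursiveReduce c F)
  | .grad (.atom s) G => .or (.atom (s.compl c)) (gradDist s (recursiveReduce c G))
  | .grad F G => .grad (recursiveReduce c F) (recursiveReduce c G)

namespace Stmt10Aux

variable {A : Type} {c : A → A}

/-- A function on prefixes depending only on the length. -/
def DO (x : List (Atom A) → Bool) : Prop :=
  ∀ ψ ψ' : List (Atom A), ψ.length = ψ'.length → x ψ = x ψ'

mutual
/-- Compositional value semantics. -/
def semV (M : GFrame A c) : Fm A → List (Atom A) → Bool
  | .atom s, ψ => M.I ψ s
  | .and F G, ψ => semV M F ψ && semV M G ψ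
  | .or F G, ψ => semV M F ψ || semV M G ψ
  | .neg F, ψ => !(semV M F ψ)
  | .grad F G, ψ => semG M F (semV M G) ψ
/-- Semantics of `F ⋗ ·` applied to the value function of the second argument. -/
def semG (M : GFrame A c) : Fm A → (List (Atom A) → Bool) → List (Atom A) → Bool
  | .atom s, x, ψ => M.I ψ s && x (ψ ++ [s])
  | .and F G, x, ψ => semG M F x ψ && semG M G x ψ
  | .or F G, x, ψ => semG M F x ψ || semG M G x ψ
  | .neg _, _, _ => false
  | .grad F G, x, ψ => semG M F x ψ && (semG M F (semV M G) ψ || semG M F (semG M G x) ψ)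
end

section Unfold
variable (M : GFrame A c)

theorem semV_atom (s : Atom A) (ψ) : semV M (.atom s) ψ = M.I ψ s := rfl
theorem semV_and (F G : Fm A) (ψ) : semV M (.and F G) ψ = (semV M F ψ && semV M G ψ) := rfl
theorem semV_or (F G : Fm A) (ψ) : semV M (.or F G) ψ = (semV M F ψ || semV M G ψ) := rfl
theorem semV_neg (F : Fm A) (ψ) : semV M (.neg F) ψ = !(semV M F ψ) := rfl
theorem semV_grad (F G : Fm A) (ψ) : semV M (.grad F G) ψ = semG M F (semV M G) ψ := rfl
theorem semG_atom (s : Atom A) (x ψ) :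
    semG M (.atom s) x ψ = (M.I ψ s && x (ψ ++ [s])) := rfl
theorem semG_and (F G : Fm A) (x ψ) :
    semG M (.and F G) x ψ = (semG M F x ψ && semG M G x ψ) := rfl
theorem semG_or (F G : Fm A) (x ψ) :
    semG M (.or F G) x ψ = (semG M F x ψ || semG M G x ψ) := rfl
theorem semG_neg (F : Fm A) (x ψ) : semG M (.neg F) x ψ = false := rfl
theorem semG_grad (F G : Fm A) (x ψ) :
    semG M (.grad F G) x ψ =
      (semG M F x ψ && (semG M F (semV M G) ψ || semG M F (semG M G x) ψ)) := rfl

theorem semV_grad_fun (F G : Fm A) : semV M (.grad F G) = semG M F (semV M G) :=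
  funext fun _ => rfl
theorem semV_and_fun (F G : Fm A) :
    semV M (.and F G) = fun ψ => semV M F ψ && semV M G ψ := funext fun _ => rfl
theorem semV_or_fun (F G : Fm A) :
    semV M (.or F G) = fun ψ => semV M F ψ || semV M G ψ := funext fun _ => rfl
end Unfold

theorem sem_DO (M : GFrame A c) (F : Fm A) :
    DO (semV M F) ∧ ∀ x, DO x → DO (semG M F x) := by
  induction F with
  | atom s =>
    refine ⟨fun ψ ψ' h => M.I_sync ψ ψ' s h, fun x hx ψ ψ' h => ?_⟩
    rw [semG_atom, semG_atom, M.I_sync ψ ψ' s h,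
      hx (ψ ++ [s]) (ψ' ++ [s]) (by simp [h])]
  | and F G ihF ihG =>
    refine ⟨fun ψ ψ' h => ?_, fun x hx ψ ψ' h => ?_⟩
    · rw [semV_and, semV_and, ihF.1 ψ ψ' h, ihG.1 ψ ψ' h]
    · rw [semG_and, semG_and, ihF.2 x hx ψ ψ' h, ihG.2 x hx ψ ψ' h]
  | or F G ihF ihG =>
    refine ⟨fun ψ ψ' h => ?_, fun x hx ψ ψ' h => ?_⟩
    · rw [semV_or, semV_or, ihF.1 ψ ψ' h, ihG.1 ψ ψ' h]
    · rw [semG_or, semG_or, ihF.2 x hx ψ ψ' h, ihG.2 x hx ψ ψ' h]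
  | neg F ihF =>
    refine ⟨fun ψ ψ' h => ?_, fun x hx ψ ψ' h => rfl⟩
    rw [semV_neg, semV_neg, ihF.1 ψ ψ' h]
  | grad F G ihF ihG =>
    refine ⟨fun ψ ψ' h => ?_, fun x hx ψ ψ' h => ?_⟩
    · rw [semV_grad, semV_grad]; exact ihF.2 _ ihG.1 ψ ψ' h
    · rw [semG_grad, semG_grad, ihF.2 x hx ψ ψ' h, ihF.2 _ ihG.1 ψ ψ' h,
        ihF.2 _ (ihG.2 x hx) ψ ψ' h]

theorem DO_and {x y : List (Atom A) → Bool} (hx : DO x) (hy : DO y) :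
    DO (fun ψ => x ψ && y ψ) := fun ψ ψ' h => by
  simp only []; rw [hx ψ ψ' h, hy ψ ψ' h]

theorem DO_or {x y : List (Atom A) → Bool} (hx : DO x) (hy : DO y) :
    DO (fun ψ => x ψ || y ψ) := fun ψ ψ' h => by
  simp only []; rw [hx ψ ψ' h, hy ψ ψ' h]

/-- The master lemma: for negation-free `F` and depth-only `x`,
`F ⋗ x` evaluates to the value of `F` conjoined with `x` at depth `|ψ| + 1`. -/
theorem semG_master (M : GFrame A c) {F : Fm A} (hF : NegFree F)
    (x : List (Atom A) → Bool) (hx : DO x) (ψ : List (Atom A)) :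
    semG M F x ψ = (semV M F ψ && x (ψ ++ [Atom.top])) := by
  induction hF generalizing x ψ with
  | atom s =>
    rw [semG_atom, semV_atom, hx (ψ ++ [s]) (ψ ++ [Atom.top]) (by simp)]
  | and hF hG ihF ihG =>
    rw [semG_and, semV_and, ihF x hx, ihG x hx]
    cases semV M _ ψ <;> cases semV M _ ψ <;> cases x (ψ ++ [Atom.top]) <;> rfl
  | or hF hG ihF ihG =>
    rw [semG_or, semV_or, ihF x hx, ihG x hx]
    cases semV M _ ψ <;> cases semV M _ ψ <;> cases x (ψ ++ [Atom.top]) <;> rfl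
  | @grad F G hF hG ihF ihG =>
    rw [semG_grad, semV_grad, ihF x hx, ihF _ (sem_DO M G).1,
      ihF _ ((sem_DO M G).2 x hx), ihG x hx (ψ ++ [Atom.top])]
    cases semV M F ψ <;> cases semV M G (ψ ++ [Atom.top]) <;>
      cases x (ψ ++ [Atom.top]) <;>
      cases x (ψ ++ [Atom.top] ++ [Atom.top]) <;> rfl

theorem negFree_step {F F' : Fm A} (h : GStep F F') (hF : NegFree F) : NegFree F' := by
  induction h with
  | gradAssoc F G H =>
    rcases hF with _ | _ | _ | ⟨⟨⟩ | ⟨⟩ | ⟨⟩ | ⟨h1, h2⟩, h3⟩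
    exact NegFree.and (NegFree.grad h1 h3)
      (NegFree.or (NegFree.grad h1 h2) (NegFree.grad h1 (NegFree.grad h2 h3)))
  | gradAndL F G H =>
    rcases hF with _ | _ | _ | ⟨⟨⟩ | ⟨h1, h2⟩, h3⟩
    exact NegFree.and (NegFree.grad h1 h3) (NegFree.grad h2 h3)
  | gradOrL F G H =>
    rcases hF with _ | _ | _ | ⟨⟨⟩ | ⟨⟩ | ⟨h1, h2⟩, h3⟩
    exact NegFree.or (NegFree.grad h1 h3) (NegFree.grad h2 h3)
  | gradAndR F G H =>
    rcases hF with _ | _ | _ | ⟨h1, ⟨⟩ | ⟨h2, h3⟩⟩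
    exact NegFree.and (NegFree.grad h1 h2) (NegFree.grad h1 h3)
  | gradOrR F G H =>
    rcases hF with _ | _ | _ | ⟨h1, ⟨⟩ | ⟨⟩ | ⟨h2, h3⟩⟩
    exact NegFree.or (NegFree.grad h1 h2) (NegFree.grad h1 h3)
  | andL G _ ih => rcases hF with _ | ⟨h1, h2⟩; exact NegFree.and (ih h1) h2
  | andR F _ ih => rcases hF with _ | ⟨h1, h2⟩; exact NegFree.and h1 (ih h2)
  | orL G _ ih => rcases hF with _ | _ | ⟨h1, h2⟩; exact NegFree.or (ih h1) h2
  | orR F _ ih => rcases hF with _ | _ | ⟨h1, h2⟩; exact NegFree.or h1 (ih h2)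
  | negC _ ih => cases hF
  | gradL G _ ih => rcases hF with _ | _ | _ | ⟨h1, h2⟩; exact NegFree.grad (ih h1) h2
  | gradR F _ ih => rcases hF with _ | _ | _ | ⟨h1, h2⟩; exact NegFree.grad h1 (ih h2)

theorem step_semV (M : GFrame A c) {F F' : Fm A} (h : GStep F F') (hF : NegFree F)
    (ψ : List (Atom A)) : semV M F ψ = semV M F' ψ := by
  induction h generalizing ψ with
  | @gradAssoc F G H =>
    rw [semV_grad, semG_grad, semV_and, semV_or, semV_grad, semV_grad, semV_grad,
      semV_grad_fun M G H]
  | gradAndL F G H => rw [semV_grad, semG_and, semV_and, semV_grad, semV_grad]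
  | gradOrL F G H => rw [semV_grad, semG_or, semV_or, semV_grad, semV_grad]
  | @gradAndR F G H =>
    rcases hF with _ | _ | _ | ⟨h1, ⟨⟩ | ⟨h2, h3⟩⟩
    rw [semV_grad, semV_and, semV_grad, semV_grad, semV_and_fun M G H,
      semG_master M h1 _ (DO_and (sem_DO M G).1 (sem_DO M H).1) ψ,
      semG_master M h1 _ (sem_DO M G).1 ψ, semG_master M h1 _ (sem_DO M H).1 ψ]
    cases semV M F ψ <;> cases semV M G (ψ ++ [Atom.top]) <;>
      cases semV M H (ψ ++ [Atom.top]) <;> rfl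
  | @gradOrR F G H =>
    rcases hF with _ | _ | _ | ⟨h1, ⟨⟩ | ⟨⟩ | ⟨h2, h3⟩⟩
    rw [semV_grad, semV_or, semV_grad, semV_grad, semV_or_fun M G H,
      semG_master M h1 _ (DO_or (sem_DO M G).1 (sem_DO M H).1) ψ,
      semG_master M h1 _ (sem_DO M G).1 ψ, semG_master M h1 _ (sem_DO M H).1 ψ]
    cases semV M F ψ <;> cases semV M G (ψ ++ [Atom.top]) <;>
      cases semV M H (ψ ++ [Atom.top]) <;> rfl
  | @andL F F' G _ ih =>
    rcases hF with _ | ⟨h1, h2⟩; rw [semV_and, semV_and, ih h1 ψ]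
  | @andR F G G' _ ih =>
    rcases hF with _ | ⟨h1, h2⟩; rw [semV_and, semV_and, ih h2 ψ]
  | @orL F F' G _ ih =>
    rcases hF with _ | _ | ⟨h1, h2⟩; rw [semV_or, semV_or, ih h1 ψ]
  | @orR F G G' _ ih =>
    rcases hF with _ | _ | ⟨h1, h2⟩; rw [semV_or, semV_or, ih h2 ψ]
  | negC _ ih => cases hF
  | @gradL F F' G hs ih =>
    rcases hF with _ | _ | _ | ⟨h1, h2⟩
    rw [semV_grad, semV_grad, semG_master M h1 _ (sem_DO M G).1 ψ,
      semG_master M (negFree_step hs h1) _ (sem_DO M G).1 ψ, ih h1 ψ]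
  | @gradR F G G' hs ih =>
    rcases hF with _ | _ | _ | ⟨h1, h2⟩
    have hfun : semV M G = semV M G' := funext fun ψ' => ih h2 ψ'
    rw [semV_grad, semV_grad, hfun]

theorem negFree_red {F F' : Fm A} (h : GRed F F') (hF : NegFree F) : NegFree F' := by
  induction h with
  | refl => exact hF
  | tail _ hs ih => exact negFree_step hs ih

theorem red_semV (M : GFrame A c) {F F' : Fm A} (h : GRed F F') (hF : NegFree F)
    (ψ : List (Atom A)) : semV M F ψ = semV M F' ψ := by
  induction h with
  | refl => rfl
  | @tail G G' hr hs ih => rw [ih, step_semV M hs (negFree_red hr hF) ψ]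

theorem unitTail_val (M : GFrame A c) {F : Fm A} (h : UnitTail F) (ψ : List (Atom A)) :
    M.valAux ψ F = semV M F ψ := by
  induction h generalizing ψ with
  | atom s => rfl
  | grad s hT ih =>
    show (M.I ψ s && M.valAux (ψ ++ [s]) _) = _
    rw [semV_grad, semG_atom, ih (ψ ++ [s])]

theorem uce_val (M : GFrame A c) {F : Fm A} (h : UCE F) (ψ : List (Atom A)) :
    M.valAux ψ F = semV M F ψ := by
  induction h generalizing ψ with
  | atom s => rfl
  | and _ _ ihF ihG =>
    show (M.valAux ψ _ && M.valAux ψ _) = _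
    rw [semV_and, ihF ψ, ihG ψ]
  | or _ _ ihF ihG =>
    show (M.valAux ψ _ || M.valAux ψ _) = _
    rw [semV_or, ihF ψ, ihG ψ]
  | chain s hT =>
    show (M.I ψ s && M.valAux (ψ ++ [s]) _) = _
    rw [semV_grad, semG_atom, unitTail_val M hT (ψ ++ [s])]

end Stmt10Aux

/-- for a negation-free formula, under any valuation frame either
all of its unit-chain-expansion reducts evaluate to 1, or all evaluate to 0. -/
theorem stmt10 {A : Type} {c : A → A} (M : GFrame A c)
    {F : Fm A} (h : NegFree F) :
    (∀ F' : Fm A, GRed F F' → UCE F' → M.val F' = true) ∨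
    (∀ F' : Fm A, GRed F F' → UCE F' → M.val F' = false) := by
  have key : ∀ F' : Fm A, GRed F F' → UCE F' → M.val F' = Stmt10Aux.semV M F [] := by
    intro F' hr hu
    rw [GFrame.val, Stmt10Aux.uce_val M hu, Stmt10Aux.red_semV M hr h]
  cases hv : Stmt10Aux.semV M F [] with
  | false => exact Or.inr fun F' hr hu => (key F' hr hu).trans hv
  | true => exact Or.inl fun F' hr hu => (key F' hr hu).trans hv
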